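/- arXiv:2103.02457 — 4 statements merged into one kernel-verified Lean document; each statement's English description precedes it below -/
import Mathlib

section
/- Let Y ~ PH(π,T) be a phase-type distributed random variable of dimension p, let Θ be a positive random variable with distribution function F_Θ, independent of Y, and set X = Y/Θ. Then the law of X is absolutely continuous on (0,∞) with Lebesgue density f_X(x) = π (∫_0^∞ θ exp(θ T x) dF_Θ(θ)) t for x > 0, where the integral of the matrix-valued function is taken entrywise and t = −T e. -/
/-!
Given `Θ = θ > 0`, the linear change of variables `y = θ x` shows that `Y / θ` has density
`θ f_Y(θ x)`; independence and Tonelli then give the law of `X = Y / Θ` the mixed density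
`x ↦ ∫ θ f_Y(θ x) dF_Θ(θ)`. Because `T` has nonnegative off-diagonal entries, every entry of
`exp(θ x T)` is nonnegative (shift `T` by a multiple of the identity and use the power series),
so `θ f_Y(θ x)` is a nonnegative combination of the entries `θ exp(θ x T)ᵢⱼ`. The mixed density
integrates to `1`, hence is finite almost everywhere, and at such points every entry is
`F_Θ`-integrable, so the Lebesgue integral splits into the entrywise Bochner integrals.
-/

open MeasureTheory ProbabilityTheory Filter Matrix Set
open scoped Topology ENNReal

noncomputable section

/-- A phase-type representation `(π, T)` of dimension `p`: `π` is a probability vector,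
`T` has nonnegative off-diagonal entries, nonpositive row sums, and all eigenvalues of
strictly negative real part. -/
structure IsPHRepr {p : ℕ} (piv : Fin p → ℝ) (T : Matrix (Fin p) (Fin p) ℝ) : Prop where
  pi_nonneg : ∀ i, 0 ≤ piv i
  pi_sum_one : ∑ i, piv i = 1
  offdiag_nonneg : ∀ i j, i ≠ j → 0 ≤ T i j
  rowsum_nonpos : ∀ i, ∑ j, T i j ≤ 0
  eig_neg : ∀ z ∈ spectrum ℂ (T.map (algebraMap ℝ ℂ)), z.re < 0

/-- Survival function `π exp(T y) e` of PH(π,T). -/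
def phSurv {p : ℕ} (piv : Fin p → ℝ) (T : Matrix (Fin p) (Fin p) ℝ) (y : ℝ) : ℝ :=
  ∑ i, ∑ j, piv i * NormedSpace.exp (y • T) i j

/-- Density `π exp(T y) t`, with `t = -T e`, of PH(π,T). -/
def phDens {p : ℕ} (piv : Fin p → ℝ) (T : Matrix (Fin p) (Fin p) ℝ) (y : ℝ) : ℝ :=
  ∑ i, ∑ j, piv i * NormedSpace.exp (y • T) i j * (-∑ k, T j k)

/-- The phase-type distribution PH(π,T): the measure on (0,∞) with Lebesgue density `phDens`. -/
def phMeasure {p : ℕ} (piv : Fin p → ℝ) (T : Matrix (Fin p) (Fin p) ℝ) : Measure ℝ :=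
  volume.withDensity fun y => if 0 < y then ENNReal.ofReal (phDens piv T y) else 0

/-- The law `μ` is regularly varying with index `-α`: the tail is eventually positive and
`μ(λx,∞)/μ(x,∞) → λ^{-α}` as `x → ∞` for every `λ > 0`. -/
def RegVary (μ : Measure ℝ) (α : ℝ) : Prop :=
  (∀ᶠ x in atTop, 0 < μ (Set.Ioi x)) ∧
  ∀ l : ℝ, 0 < l →
    Tendsto (fun x => (μ (Set.Ioi (l * x))).toReal / (μ (Set.Ioi x)).toReal) atTop
      (𝓝 (l ^ (-α)))

/-- Subexponentiality of the law `μ`: positive tail and `(1 - F*F(x))/(1 - F(x)) → 2`. -/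
def Subexponential (μ : Measure ℝ) : Prop :=
  (∀ x : ℝ, 0 < μ (Set.Ioi x)) ∧
  Tendsto (fun x => ((μ.conv μ) (Set.Ioi x)).toReal / (μ (Set.Ioi x)).toReal) atTop (𝓝 2)

/-- The class 𝒜: subexponential laws with `limsup F̄(cx)/F̄(x) < 1` for some `c > 1`. -/
def ClassA (μ : Measure ℝ) : Prop :=
  Subexponential μ ∧ ∃ c : ℝ, 1 < c ∧
    Filter.limsup (fun x => (μ (Set.Ioi (c * x))).toReal / (μ (Set.Ioi x)).toReal) atTop < 1

/-- Extended regular variation: `liminf F̄(λx)/F̄(x) ≥ λ^{-φ}` for some `φ ≥ 0`, all `λ ≥ 1`. -/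
def ExtRegVary (μ : Measure ℝ) : Prop :=
  ∃ φ : ℝ, 0 ≤ φ ∧ ∀ l : ℝ, 1 ≤ l →
    l ^ (-φ) ≤
      Filter.liminf (fun x => (μ (Set.Ioi (l * x))).toReal / (μ (Set.Ioi x)).toReal) atTop

/-- Intermediate regular variation: `lim_{λ↓1} liminf_{x→∞} F̄(λx)/F̄(x) = 1`. -/
def IntRegVary (μ : Measure ℝ) : Prop :=
  Tendsto
    (fun l : ℝ =>
      Filter.liminf (fun x => (μ (Set.Ioi (l * x))).toReal / (μ (Set.Ioi x)).toReal) atTop)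
    (𝓝[>] (1 : ℝ)) (𝓝 1)

/-- Dominated variation: `liminf F̄(λx)/F̄(x) > 0` for some `λ > 1`. -/
def DomVary (μ : Measure ℝ) : Prop :=
  ∃ l : ℝ, 1 < l ∧
    0 < Filter.liminf (fun x => (μ (Set.Ioi (l * x))).toReal / (μ (Set.Ioi x)).toReal) atTop

/-- Long-tailed laws: positive tail and `F̄(x-y)/F̄(x) → 1` for every `y`. -/
def LongTailed (μ : Measure ℝ) : Prop :=
  (∀ x : ℝ, 0 < μ (Set.Ioi x)) ∧
  ∀ y : ℝ,
    Tendsto (fun x => (μ (Set.Ioi (x - y))).toReal / (μ (Set.Ioi x)).toReal) atTop (𝓝 1)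

/-- `μY` is α-regular-variation determining: for every law `μZ` of a nonnegative random
variable (taken independent of `Y`, i.e. via the product measure), regular variation with
index `-α` of the law of the product implies that of `μZ`. -/
def IsRVD (μY : Measure ℝ) (α : ℝ) : Prop :=
  ∀ μZ : Measure ℝ, IsProbabilityMeasure μZ → μZ (Set.Iio 0) = 0 →
    RegVary (Measure.map (fun q : ℝ × ℝ => q.1 * q.2) (μY.prod μZ)) α → RegVary μZ α

namespace Matrix

variable {m : Type*} [Fintype m] [DecidableEq m]

section

attribute [local instance] Matrix.linftyOpNormedRing Matrix.linftyOpNormedAlgebra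

theorem exp_apply_nonneg_of_forall_nonneg {M : Matrix m m ℝ} (hM : ∀ i j, 0 ≤ M i j)
    (i j : m) : 0 ≤ NormedSpace.exp M i j := by
  have hpow : ∀ n : ℕ, ∀ i j, 0 ≤ (M ^ n) i j := by
    intro n
    induction n with
    | zero => intro i j; simp only [pow_zero, one_apply]; split_ifs <;> norm_num
    | succ n ih =>
      intro i j
      rw [pow_succ, mul_apply]
      exact Finset.sum_nonneg fun k _ => mul_nonneg (ih i k) (hM k j)
  have hsum := NormedSpace.exp_series_hasSum_exp' (𝕂 := ℝ) M
  exact (Pi.hasSum.mp (Pi.hasSum.mp hsum i) j).nonneg fun n =>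
    mul_nonneg (by positivity) (hpow n i j)

@[fun_prop]
theorem continuous_exp_smul_apply {α : Type*} [TopologicalSpace α] {f : α → ℝ}
    (hf : Continuous f) (T : Matrix m m ℝ) (i j : m) :
    Continuous fun a => NormedSpace.exp (f a • T) i j :=
  (NormedSpace.exp_continuous.comp (hf.smul continuous_const) :
    Continuous fun a => NormedSpace.exp (f a • T)).matrix_elem i j

end

theorem exp_apply_nonneg_of_offDiag_nonneg {M : Matrix m m ℝ} (hM : ∀ i j, i ≠ j → 0 ≤ M i j)
    (i j : m) : 0 ≤ NormedSpace.exp M i j := by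
  set c : ℝ := ∑ k, |M k k|
  have hshift : ∀ i j, 0 ≤ (M + c • 1) i j := by
    intro i j
    rcases eq_or_ne i j with rfl | hij
    · have : |M i i| ≤ c :=
        Finset.single_le_sum (f := fun k => |M k k|) (fun k _ => abs_nonneg _)
          (Finset.mem_univ i)
      simp only [add_apply, smul_apply, one_apply_eq, smul_eq_mul, mul_one]
      linarith [neg_abs_le (M i i)]
    · simpa [one_apply_ne hij] using hM i j hij
  have hsplit : M = (-c) • (1 : Matrix m m ℝ) + (M + c • 1) := by module
  rw [hsplit, exp_add_of_commute _ _ ((Commute.one_left _).smul_left _), smul_one_eq_diagonal,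
    exp_diagonal, diagonal_mul, Pi.coe_exp, ← Real.exp_eq_exp_ℝ]
  exact mul_nonneg (Real.exp_pos _).le (exp_apply_nonneg_of_forall_nonneg hshift i j)

end Matrix

theorem map_div_const_withDensity {g : ℝ → ℝ≥0∞} (hg : Measurable g) {θ : ℝ} (hθ : 0 < θ) :
    (volume.withDensity g).map (· / θ) =
      volume.withDensity fun x => ENNReal.ofReal θ * g (θ * x) := by
  ext s hs
  have hpre : MeasurableSet ((· / θ) ⁻¹' s) := measurable_div_const θ hs
  have hinv : (θ * ·) ⁻¹' ((· / θ) ⁻¹' s) = s := by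
    ext x; simp [mul_div_cancel_left₀ x hθ.ne']
  rw [Measure.map_apply (measurable_div_const θ) hs, withDensity_apply _ hpre,
    withDensity_apply _ hs,
    lintegral_const_mul (f := fun x => g (θ * x)) _ (hg.comp (measurable_const_mul θ))]
  conv_lhs => rw [← Real.smul_map_volume_mul_left hθ.ne']
  rw [Measure.restrict_smul, lintegral_smul_measure,
    setLIntegral_map hpre hg (measurable_const_mul θ), hinv, abs_of_pos hθ, smul_eq_mul]

theorem map_div_prod_withDensity {g : ℝ → ℝ≥0∞} (hg : Measurable g) (ν : Measure ℝ) [SFinite ν]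
    (hν : ∀ᵐ θ ∂ν, 0 < θ) :
    ((volume.withDensity g).prod ν).map (fun q => q.1 / q.2) =
      volume.withDensity fun x => ∫⁻ θ, ENNReal.ofReal θ * g (θ * x) ∂ν := by
  have hdiv : Measurable fun q : ℝ × ℝ => q.1 / q.2 := measurable_fst.div measurable_snd
  have hG : Measurable fun q : ℝ × ℝ => ENNReal.ofReal q.2 * g (q.2 * q.1) :=
    measurable_snd.ennreal_ofReal.mul (hg.comp (measurable_snd.mul measurable_fst))
  ext s hs
  rw [Measure.map_apply hdiv hs, Measure.prod_apply_symm (hdiv hs), withDensity_apply _ hs,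
    lintegral_lintegral_swap hG.aemeasurable]
  refine lintegral_congr_ae (hν.mono fun θ hθ => ?_)
  dsimp only
  rw [← withDensity_apply _ hs, ← map_div_const_withDensity hg hθ,
    Measure.map_apply (measurable_div_const θ) hs]
  rfl

theorem map_div_eq_withDensity_of_indepFun {Ω : Type*} [MeasurableSpace Ω] {P : Measure Ω}
    [IsFiniteMeasure P] {Y Θ : Ω → ℝ} (hY : Measurable Y) (hΘ : Measurable Θ)
    (hind : IndepFun Y Θ P) (hΘpos : ∀ᵐ ω ∂P, 0 < Θ ω) {g : ℝ → ℝ≥0∞} (hg : Measurable g)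
    (hYlaw : P.map Y = volume.withDensity g) :
    P.map (fun ω => Y ω / Θ ω) =
      volume.withDensity fun x => ∫⁻ θ, ENNReal.ofReal θ * g (θ * x) ∂(P.map Θ) := by
  have hdiv : Measurable fun q : ℝ × ℝ => q.1 / q.2 := measurable_fst.div measurable_snd
  rw [← map_div_prod_withDensity hg _ ((ae_map_iff hΘ.aemeasurable measurableSet_Ioi).2 hΘpos),
    ← hYlaw, ← (indepFun_iff_map_prod_eq_prod_map_map hY.aemeasurable hΘ.aemeasurable).1 hind,
    Measure.map_map hdiv (hY.prodMk hΘ)]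
  rfl

theorem ofReal_sum_mul_integral_eq_lintegral {α ι : Type*} [MeasurableSpace α] {μ : Measure α}
    (s : Finset ι) {c : ι → ℝ} {f : ι → α → ℝ} (hc : ∀ i ∈ s, 0 ≤ c i)
    (hf : ∀ i ∈ s, 0 ≤ᵐ[μ] f i) (hfm : ∀ i ∈ s, AEStronglyMeasurable (f i) μ)
    (hfin : ∫⁻ a, ENNReal.ofReal (∑ i ∈ s, c i * f i a) ∂μ ≠ ∞) :
    ENNReal.ofReal (∑ i ∈ s, c i * ∫ a, f i a ∂μ) =
      ∫⁻ a, ENNReal.ofReal (∑ i ∈ s, c i * f i a) ∂μ := by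
  have hterm_nonneg : ∀ᵐ a ∂μ, ∀ i ∈ s, 0 ≤ c i * f i a :=
    (Filter.eventually_all_finset s).2 fun i hi =>
      (hf i hi).mono fun a ha => mul_nonneg (hc i hi) ha
  have hsum_nonneg : 0 ≤ᵐ[μ] fun a => ∑ i ∈ s, c i * f i a :=
    hterm_nonneg.mono fun a ha => Finset.sum_nonneg ha
  have hsum_int : Integrable (fun a => ∑ i ∈ s, c i * f i a) μ :=
    ⟨Finset.aestronglyMeasurable_fun_sum s fun i hi => (hfm i hi).const_mul (c i),
      (hasFiniteIntegral_iff_ofReal hsum_nonneg).2 hfin.lt_top⟩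
  have hterm_int : ∀ i ∈ s, Integrable (fun a => c i * f i a) μ := fun i hi =>
    hsum_int.mono' ((hfm i hi).const_mul (c i)) <| hterm_nonneg.mono fun a ha => by
      rw [Real.norm_of_nonneg (ha i hi)]
      exact Finset.single_le_sum ha hi
  simp_rw [← integral_const_mul, ← integral_finsetSum s hterm_int]
  exact ofReal_integral_eq_lintegral_ofReal hsum_int hsum_nonneg

theorem continuous_phDens {p : ℕ} (piv : Fin p → ℝ) (T : Matrix (Fin p) (Fin p) ℝ) :
    Continuous (phDens piv T) := by
  unfold phDens
  fun_prop

theorem mul_phDens_mul_eq_sum {p : ℕ} (piv : Fin p → ℝ) (T : Matrix (Fin p) (Fin p) ℝ)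
    (θ x : ℝ) :
    θ * phDens piv T (θ * x) = ∑ ij : Fin p × Fin p,
      (piv ij.1 * -∑ k, T ij.2 k) * (θ * NormedSpace.exp ((θ * x) • T) ij.1 ij.2) := by
  rw [phDens, Finset.mul_sum, ← Finset.univ_product_univ, Finset.sum_product]
  refine Finset.sum_congr rfl fun i _ => ?_
  rw [Finset.mul_sum]
  exact Finset.sum_congr rfl fun j _ => by ring

namespace IsPHRepr

variable {p : ℕ} {piv : Fin p → ℝ} {T : Matrix (Fin p) (Fin p) ℝ}

theorem exitRate_nonneg (hPH : IsPHRepr piv T) (j : Fin p) : 0 ≤ -∑ k, T j k :=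
  neg_nonneg.2 (hPH.rowsum_nonpos j)

theorem exp_smul_apply_nonneg (hPH : IsPHRepr piv T) {y : ℝ} (hy : 0 ≤ y) (i j : Fin p) :
    0 ≤ NormedSpace.exp (y • T) i j :=
  Matrix.exp_apply_nonneg_of_offDiag_nonneg
    (fun a b hab => mul_nonneg hy (hPH.offdiag_nonneg a b hab)) i j

theorem lintegral_ofReal_mul_phDens (hPH : IsPHRepr piv T) {ν : Measure ℝ} (hν : ∀ᵐ θ ∂ν, 0 < θ)
    {x : ℝ} (hx : 0 < x)
    (hfin : ∫⁻ θ, ENNReal.ofReal (θ * phDens piv T (θ * x)) ∂ν ≠ ∞) :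
    ∫⁻ θ, ENNReal.ofReal (θ * phDens piv T (θ * x)) ∂ν =
      ENNReal.ofReal (∑ i, ∑ j, piv i *
        (∫ θ, θ * NormedSpace.exp ((θ * x) • T) i j ∂ν) * (-∑ k, T j k)) := by
  have hc : ∀ ij ∈ (Finset.univ : Finset (Fin p × Fin p)), 0 ≤ piv ij.1 * -∑ k, T ij.2 k :=
    fun ij _ => mul_nonneg (hPH.pi_nonneg ij.1) (hPH.exitRate_nonneg ij.2)
  have hE : ∀ ij ∈ (Finset.univ : Finset (Fin p × Fin p)),
      0 ≤ᵐ[ν] fun θ => θ * NormedSpace.exp ((θ * x) • T) ij.1 ij.2 := fun ij _ =>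
    hν.mono fun θ hθ =>
      mul_nonneg hθ.le (hPH.exp_smul_apply_nonneg (mul_pos hθ hx).le ij.1 ij.2)
  have hEm : ∀ ij ∈ (Finset.univ : Finset (Fin p × Fin p)),
      AEStronglyMeasurable (fun θ => θ * NormedSpace.exp ((θ * x) • T) ij.1 ij.2) ν :=
    fun ij _ => (by fun_prop : Continuous _).aestronglyMeasurable
  simp only [mul_phDens_mul_eq_sum] at hfin ⊢
  rw [← ofReal_sum_mul_integral_eq_lintegral _ hc hE hEm hfin, Fintype.sum_prod_type]
  congr 1
  exact Finset.sum_congr rfl fun i _ => Finset.sum_congr rfl fun j _ => by ring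

end IsPHRepr

/-- the law of `X = Y/Θ` is absolutely continuous on `(0,∞)` with Lebesgue
density `f_X(x) = π (∫₀^∞ θ exp(θ T x) dF_Θ(θ)) t` for `x > 0`, with `t = -T e`. -/
theorem cph_density
    {Ω : Type*} [MeasureSpace Ω] [IsProbabilityMeasure (ℙ : Measure Ω)]
    {p : ℕ} (piv : Fin p → ℝ) (T : Matrix (Fin p) (Fin p) ℝ) (hPH : IsPHRepr piv T)
    (Y Θ : Ω → ℝ) (hYm : Measurable Y) (hΘm : Measurable Θ)
    (hInd : IndepFun Y Θ ℙ)
    (hΘpos : ∀ᵐ ω ∂ℙ, 0 < Θ ω)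
    (hYlaw : Measure.map Y ℙ = phMeasure piv T) :
    Measure.map (fun ω => Y ω / Θ ω) ℙ
      = volume.withDensity fun x =>
          if 0 < x then
            ENNReal.ofReal
              (∑ i, ∑ j, piv i *
                (∫ θ, θ * NormedSpace.exp ((θ * x) • T) i j ∂(Measure.map Θ ℙ)) *
                (-∑ k, T j k))
          else 0 := by
  set μΘ := Measure.map Θ ℙ
  set g : ℝ → ℝ≥0∞ := fun y => if 0 < y then ENNReal.ofReal (phDens piv T y) else 0
  have hg : Measurable g :=
    Measurable.ite measurableSet_Ioi (continuous_phDens piv T).measurable.ennreal_ofReal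
      measurable_const
  have hθpos : ∀ᵐ θ ∂μΘ, 0 < θ := (ae_map_iff hΘm.aemeasurable measurableSet_Ioi).2 hΘpos
  have hlaw := map_div_eq_withDensity_of_indepFun hYm hΘm hInd hΘpos hg hYlaw
  -- Off this null set the Bochner integrals in the statement would be junk values.
  have hfin : ∀ᵐ x, ∫⁻ θ, ENNReal.ofReal θ * g (θ * x) ∂μΘ < ∞ := by
    refine ae_lt_top (Measurable.lintegral_prod_left' (f := fun q : ℝ × ℝ =>
      ENNReal.ofReal q.1 * g (q.1 * q.2)) (by fun_prop)) ?_
    rw [← setLIntegral_univ, ← withDensity_apply _ MeasurableSet.univ, ← hlaw]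
    exact measure_ne_top _ _
  rw [hlaw]
  refine withDensity_congr_ae (hfin.mono fun x hx => ?_)
  dsimp only
  split_ifs with hx0
  · have hg_mul : ∫⁻ θ, ENNReal.ofReal θ * g (θ * x) ∂μΘ =
        ∫⁻ θ, ENNReal.ofReal (θ * phDens piv T (θ * x)) ∂μΘ :=
      lintegral_congr_ae <| hθpos.mono fun θ hθ => by
        simp only [g, if_pos (mul_pos hθ hx0), ENNReal.ofReal_mul hθ.le]
    rw [hg_mul] at hx ⊢
    exact hPH.lintegral_ofReal_mul_phDens hθpos hx0 hx.ne
  · refine (lintegral_congr_ae (hθpos.mono fun θ hθ => ?_)).trans lintegral_zero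
    have hθx : ¬0 < θ * x := not_lt.2 (mul_nonpos_of_nonneg_of_nonpos hθ.le (not_lt.1 hx0))
    simp only [g, if_neg hθx, mul_zero]
end
end

section
/- Let C be a family of probability measures on (0,∞) that contains a sequence converging weakly to the Dirac measure at some constant c > 0. Then the class D of continuous scaled phase-type laws built from C is weakly dense in the set of all probability measures on (0,∞): for every probability measure μ on (0,∞) there exist measures ν_n ∈ C and phase-type distributions PH(π_n, T_n) such that, taking Θ_n with law ν_n and Y_n ~ PH(π_n, T_n) independent, the law of Y_n/Θ_n converges weakly to μ as n → ∞. -/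
open MeasureTheory ProbabilityTheory Filter Matrix Set
open scoped Topology ENNReal

noncomputable section

/-!
Erlang laws are phase-type: a chain that steps down through the phases `i, i - 1, …, 0` at
rate `r` and is absorbed from phase `0` at rate `r` has an Erlang(`i + 1`, `r`) absorption time
when started in phase `i`. Moving the mass of the law of `c X` (`X ~ μ`) near `x` to the Erlang
law with rate `n + 1` and `⌊(n + 1) x⌋ + 1` phases, whose mean is within `1 / (n + 1)` of `x`
and whose variance is `O(1 / n)`, gives phase-type laws `Y_n → c X`.

For a fixed phase-type `Y` and `Θ_m ~ ν₀ m`, Fubini writes `E f(Y / Θ_m)` as `E H(Θ_m)` with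
`H θ = E f(Y / θ)`, which is bounded and continuous at `c ≠ 0`; since `ν₀ m → δ_c` this tends to
`E f(Y / c)`. So `μ`, the weak limit of the laws of `Y_n / c`, lies in the weak closure of the
scaled phase-type laws, and as weak convergence of probability measures on `ℝ` is metrizable,
one sequence of such laws converges to `μ`.
-/

lemma spectrum_subset_singleton_zero_of_isNilpotent {𝕜 A : Type*} [Field 𝕜] [Ring A]
    [Algebra 𝕜 A] {a : A} (ha : IsNilpotent a) : spectrum 𝕜 a ⊆ {0} := by
  intro w hw
  by_contra hw0
  rw [spectrum.mem_iff, sub_eq_add_neg] at hw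
  exact hw <| ha.neg.isUnit_add_left_of_commute
    ((Units.mk0 w hw0).isUnit.map (algebraMap 𝕜 A)) (Algebra.commutes _ _).symm

lemma gammaPDFReal_natCast_add_one (k : ℕ) (r : ℝ) {y : ℝ} (hy : 0 ≤ y) :
    gammaPDFReal (k + 1) r y = r * (r * y) ^ k / k.factorial * Real.exp (-(r * y)) := by
  rw [gammaPDFReal, if_pos hy, Real.Gamma_nat_eq_factorial, add_sub_cancel_right,
    Real.rpow_natCast, ← Nat.cast_succ, Real.rpow_natCast, mul_pow, pow_succ]
  ring

section GammaMoments

variable {a r : ℝ}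

lemma gammaPDFReal_mul_self (ha : 0 < a) (hr : 0 < r) (x : ℝ) :
    gammaPDFReal a r x * x = a / r * gammaPDFReal (a + 1) r x := by
  unfold gammaPDFReal
  split_ifs with hx
  · rw [Real.Gamma_add_one ha.ne', Real.rpow_add_one hr.ne', add_sub_cancel_right]
    rcases hx.eq_or_lt with rfl | hx
    · simp [Real.zero_rpow ha.ne']
    · rw [Real.rpow_sub_one hx.ne']
      field_simp
  · simp

lemma integrable_gammaPDFReal (ha : 0 < a) (hr : 0 < r) : Integrable (gammaPDFReal a r) :=
  ⟨(measurable_gammaPDFReal a r).aestronglyMeasurable,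
    (hasFiniteIntegral_iff_ofReal (ae_of_all _ (gammaPDFReal_nonneg ha hr))).2
      ((lintegral_gammaPDF_eq_one ha hr).trans_lt ENNReal.one_lt_top)⟩

lemma integral_gammaPDFReal (ha : 0 < a) (hr : 0 < r) : ∫ x, gammaPDFReal a r x = 1 := by
  rw [integral_eq_lintegral_of_nonneg_ae (ae_of_all _ (gammaPDFReal_nonneg ha hr))
    (measurable_gammaPDFReal a r).aestronglyMeasurable]
  exact congrArg ENNReal.toReal (lintegral_gammaPDF_eq_one ha hr)

lemma integral_gammaMeasure (ha : 0 < a) (hr : 0 < r) (g : ℝ → ℝ) :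
    ∫ x, g x ∂gammaMeasure a r = ∫ x, gammaPDFReal a r x * g x := by
  rw [gammaMeasure, integral_withDensity_eq_integral_toReal_smul (f := gammaPDF a r)
    (measurable_gammaPDFReal a r).ennreal_ofReal (ae_of_all _ fun _ => ENNReal.ofReal_lt_top)]
  simp [gammaPDF, ENNReal.toReal_ofReal (gammaPDFReal_nonneg ha hr _)]

lemma integrable_gammaMeasure_iff (ha : 0 < a) (hr : 0 < r) {g : ℝ → ℝ} :
    Integrable g (gammaMeasure a r) ↔ Integrable (fun x => gammaPDFReal a r x * g x) := by
  rw [gammaMeasure, integrable_withDensity_iff_integrable_smul' (f := gammaPDF a r)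
    (measurable_gammaPDFReal a r).ennreal_ofReal (ae_of_all _ fun _ => ENNReal.ofReal_lt_top)]
  simp [gammaPDF, ENNReal.toReal_ofReal (gammaPDFReal_nonneg ha hr _)]

lemma gammaPDFReal_mul_sq_sub (ha : 0 < a) (hr : 0 < r) (x z : ℝ) :
    gammaPDFReal a r x * (x - z) ^ 2 =
      a / r * ((a + 1) / r) * gammaPDFReal (a + 2) r x
        - 2 * z * (a / r) * gammaPDFReal (a + 1) r x + z ^ 2 * gammaPDFReal a r x := by
  have h1 := gammaPDFReal_mul_self ha hr x
  have h2 := gammaPDFReal_mul_self (a := a + 1) (by positivity) hr x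
  rw [add_assoc, one_add_one_eq_two] at h2
  linear_combination (x - 2 * z) * h1 + a / r * h2

lemma integrable_sq_sub_gammaMeasure (ha : 0 < a) (hr : 0 < r) (z : ℝ) :
    Integrable (fun x => (x - z) ^ 2) (gammaMeasure a r) := by
  rw [integrable_gammaMeasure_iff ha hr]
  simp_rw [gammaPDFReal_mul_sq_sub ha hr]
  exact ((((integrable_gammaPDFReal (by positivity) hr).const_mul _).sub
    ((integrable_gammaPDFReal (by positivity) hr).const_mul _)).add
    ((integrable_gammaPDFReal ha hr).const_mul _))

lemma integral_sq_sub_gammaMeasure (ha : 0 < a) (hr : 0 < r) (z : ℝ) :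
    ∫ x, (x - z) ^ 2 ∂gammaMeasure a r = (a / r - z) ^ 2 + a / r ^ 2 := by
  have h0 := integrable_gammaPDFReal ha hr
  have h1 := integrable_gammaPDFReal (a := a + 1) (by positivity) hr
  have h2 := integrable_gammaPDFReal (a := a + 2) (by positivity) hr
  rw [integral_gammaMeasure ha hr]
  simp_rw [gammaPDFReal_mul_sq_sub ha hr]
  rw [integral_add ?_ (h0.const_mul _), integral_sub (h2.const_mul _) (h1.const_mul _),
    integral_const_mul, integral_const_mul,
    integral_const_mul, integral_gammaPDFReal ha hr, integral_gammaPDFReal (by positivity) hr,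
    integral_gammaPDFReal (by positivity) hr]
  · field_simp
    ring
  · exact (h2.const_mul _).sub (h1.const_mul _)

end GammaMoments

lemma integral_sq_sub_gammaMeasure_floor_le {r x : ℝ} (hr : 1 ≤ r) (hx : 0 ≤ x) :
    ∫ y, (y - x) ^ 2 ∂gammaMeasure (⌊r * x⌋₊ + 1) r ≤ (x + 2) / r := by
  have hr0 : 0 < r := by positivity
  rw [integral_sq_sub_gammaMeasure (by positivity) hr0]
  have hlo := Nat.floor_le (mul_nonneg hr0.le hx)
  have hhi := Nat.lt_floor_add_one (r * x)
  calc ((⌊r * x⌋₊ + 1) / r - x) ^ 2 + (⌊r * x⌋₊ + 1) / r ^ 2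
      = ((⌊r * x⌋₊ + 1 - r * x) ^ 2 + (⌊r * x⌋₊ + 1)) / r ^ 2 := by field_simp
    _ ≤ (r * x + 2) / r ^ 2 := by
        gcongr ?_ / _
        nlinarith [mul_nonneg (sub_nonneg.mpr hlo) (sub_nonneg.mpr hhi.le)]
    _ ≤ (x + 2) / r := by rw [div_le_div_iff₀ (by positivity) hr0]; nlinarith

section Concentration

variable {ι X : Type*} [PseudoMetricSpace X] [MeasurableSpace X]

def ConcentratesAt (P : ι → Measure X) (l : Filter ι) (x : X) : Prop :=
  ∀ δ > 0, Tendsto (fun i => (P i).real {y | δ ≤ dist y x}) l (𝓝 0)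

variable [OpensMeasurableSpace X] {P : ι → Measure X} {l : Filter ι} {x : X}

lemma measurableSet_dist_ge (x : X) (δ : ℝ) : MeasurableSet {y | δ ≤ dist y x} :=
  (isClosed_le continuous_const (continuous_id.dist continuous_const)).measurableSet

lemma ConcentratesAt.tendsto_integral [∀ i, IsProbabilityMeasure (P i)]
    (hP : ConcentratesAt P l x) {H : X → ℝ} {B : ℝ} (hHB : ∀ y, |H y| ≤ B)
    (hHm : ∀ i, AEStronglyMeasurable H (P i)) (hHx : ContinuousAt H x) :
    Tendsto (fun i => ∫ y, H y ∂P i) l (𝓝 (H x)) := by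
  rw [Metric.tendsto_nhds]
  intro ε hε
  obtain ⟨δ, hδ, hHδ⟩ := Metric.continuousAt_iff.mp hHx (ε / 2) (half_pos hε)
  set F := {y | δ ≤ dist y x}
  have hB : 0 ≤ B := (abs_nonneg _).trans (hHB x)
  have hbound (y : X) : ‖H y - H x‖ ≤ ε / 2 + F.indicator (fun _ => 2 * B) y := by
    rw [Real.norm_eq_abs]
    by_cases hy : y ∈ F
    · rw [indicator_of_mem hy]
      linarith [abs_sub (H y) (H x), hHB y, hHB x]
    · rw [indicator_of_notMem hy]
      have := hHδ (not_le.mp hy)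
      rw [Real.dist_eq] at this
      linarith
  filter_upwards [(hP δ hδ).eventually (gt_mem_nhds (show 0 < ε / (2 * (2 * B + 1)) by positivity))]
    with i hi
  change (P i).real F < _ at hi
  have hint : Integrable H (P i) := .of_bound (hHm i) B (ae_of_all _ hHB)
  have hFm : MeasurableSet F := measurableSet_dist_ge x δ
  calc dist (∫ y, H y ∂P i) (H x) = ‖∫ y, (H y - H x) ∂P i‖ := by
        rw [dist_eq_norm, integral_sub hint (integrable_const _)]
        simp
    _ ≤ ∫ y, (ε / 2 + F.indicator (fun _ => 2 * B) y) ∂P i :=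
        norm_integral_le_of_norm_le ((integrable_const _).add ((integrable_const _).indicator hFm))
          (ae_of_all _ hbound)
    _ = ε / 2 + 2 * B * (P i).real F := by
        rw [integral_add (integrable_const _) ((integrable_const _).indicator hFm),
          integral_indicator_const _ hFm]
        simp [mul_comm]
    _ < ε := by
        have := measureReal_nonneg (μ := P i) (s := F)
        rw [lt_div_iff₀ (by positivity)] at hi
        nlinarith

lemma concentratesAt_of_forall_tendsto_integral [∀ i, IsFiniteMeasure (P i)]
    (h : ∀ g : BoundedContinuousFunction X ℝ, Tendsto (fun i => ∫ y, g y ∂P i) l (𝓝 (g x))) :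
    ConcentratesAt P l x := by
  intro δ hδ
  let g : BoundedContinuousFunction X ℝ :=
    .ofNormedAddCommGroup (fun y => min 1 (dist y x / δ)) (by fun_prop) 1 fun y => by
      rw [Real.norm_eq_abs, abs_of_nonneg (by positivity)]
      exact min_le_left _ _
  have hg : g x = 0 := by simp [g]
  refine squeeze_zero (fun _ => measureReal_nonneg) (fun i => ?_) (hg ▸ h g)
  rw [← integral_indicator_one (measurableSet_dist_ge x δ)]
  refine integral_mono ((integrable_const 1).indicator (measurableSet_dist_ge x δ))
    (g.integrable _) fun y => ?_
  by_cases hy : δ ≤ dist y x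
  · simp [indicator_of_mem (show y ∈ {y | δ ≤ dist y x} from hy), g, (one_le_div hδ).mpr hy]
  · simp [indicator_of_notMem (show y ∉ {y | δ ≤ dist y x} from hy), g]
    positivity

end Concentration

lemma concentratesAt_of_tendsto_integral_sq_sub {ι : Type*} {P : ι → Measure ℝ} {l : Filter ι}
    {x : ℝ} [∀ i, IsFiniteMeasure (P i)] (hint : ∀ i, Integrable (fun y => (y - x) ^ 2) (P i))
    (h : Tendsto (fun i => ∫ y, (y - x) ^ 2 ∂P i) l (𝓝 0)) : ConcentratesAt P l x := by
  intro δ hδ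
  refine squeeze_zero (fun _ => measureReal_nonneg) (fun i => ?_)
    (by simpa using h.div_const (δ ^ 2))
  rw [le_div_iff₀ (by positivity), mul_comm]
  refine le_trans ?_
    (mul_meas_ge_le_integral_of_nonneg (ae_of_all _ fun y => sq_nonneg _) (hint i) (δ ^ 2))
  refine mul_le_mul_of_nonneg_left (measureReal_mono fun y (hy : δ ≤ |y - x|) => ?_) (by positivity)
  simpa [sq_abs] using pow_le_pow_left₀ hδ.le hy 2

lemma integral_map_div (ρ : Measure (ℝ × ℝ)) (f : BoundedContinuousFunction ℝ ℝ) :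
    ∫ y, f y ∂ρ.map (fun q => q.1 / q.2) = ∫ q, f (q.1 / q.2) ∂ρ :=
  integral_map (measurable_fst.div measurable_snd).aemeasurable f.continuous.aestronglyMeasurable

def divLaw (P ν : Measure ℝ) [IsProbabilityMeasure P] [IsProbabilityMeasure ν] :
    ProbabilityMeasure ℝ :=
  ⟨(P.prod ν).map fun q => q.1 / q.2, Measure.isProbabilityMeasure_map (by fun_prop)⟩

lemma tendsto_divLaw {ι : Type*} {l : Filter ι} {P : ProbabilityMeasure ℝ}
    {ν : ι → Measure ℝ} [∀ i, IsProbabilityMeasure (ν i)] {c : ℝ} (hc : c ≠ 0)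
    (hν : ConcentratesAt ν l c) :
    Tendsto (fun i => divLaw P (ν i)) l (𝓝 (P.map (measurable_div_const c).aemeasurable)) := by
  refine ProbabilityMeasure.tendsto_iff_forall_integral_tendsto.2 fun f => ?_
  simp only [divLaw, ProbabilityMeasure.coe_mk, ProbabilityMeasure.toMeasure_map,
    integral_map_div]
  rw [integral_map (measurable_div_const c).aemeasurable f.continuous.aestronglyMeasurable]
  have hmeas : StronglyMeasurable fun q : ℝ × ℝ => f (q.1 / q.2) :=
    (f.continuous.measurable.comp (measurable_fst.div measurable_snd)).stronglyMeasurable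
  have hbound (q : ℝ × ℝ) : ‖f (q.1 / q.2)‖ ≤ ‖f‖ := f.norm_coe_le_norm _
  have hH (θ : ℝ) : |∫ y, f (y / θ) ∂(P : Measure ℝ)| ≤ ‖f‖ := by
    simpa using norm_integral_le_of_norm_le_const (μ := (P : Measure ℝ)) (f := fun y => f (y / θ))
      (ae_of_all _ fun y => hbound (y, θ))
  simp_rw [integral_prod_symm _ (.of_bound hmeas.aestronglyMeasurable _ (ae_of_all _ hbound))]
  refine hν.tendsto_integral hH (fun _ => hmeas.integral_prod_left'.aestronglyMeasurable) ?_
  refine continuousAt_of_dominated (bound := fun _ => ‖f‖)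
    (.of_forall fun θ =>
      (hmeas.comp_measurable (measurable_id.prodMk measurable_const)).aestronglyMeasurable)
    (.of_forall fun θ => ae_of_all _ fun y => hbound (y, θ)) (integrable_const _)
    (ae_of_all _ fun y =>
      f.continuous.continuousAt.comp (continuousAt_const.div continuousAt_id hc))

namespace PhaseType

def lowerShift (n : ℕ) : Matrix (Fin n) (Fin n) ℝ :=
  Matrix.of fun i j => if (i : ℕ) = j + 1 then 1 else 0

lemma lowerShift_pow_apply (n k : ℕ) (i j : Fin n) :
    (lowerShift n ^ k) i j = if (i : ℕ) = j + k then 1 else 0 := by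
  induction k generalizing i with
  | zero => simp [Matrix.one_apply, Fin.ext_iff]
  | succ k ih =>
    rw [pow_succ', Matrix.mul_apply]
    simp_rw [ih]
    simp only [lowerShift, Matrix.of_apply, ite_mul, one_mul, zero_mul]
    split_ifs with h
    · rw [Finset.sum_eq_single ⟨j + k, by omega⟩]
      · simp [h, add_assoc]
      · intro l _ hl
        split_ifs <;> first | rfl | exact absurd (Fin.ext (by simp; omega)) hl
      · simp
    · exact Finset.sum_eq_zero fun l _ => by split_ifs <;> first | rfl | omega

lemma lowerShift_pow_eq_zero {n k : ℕ} (hk : n ≤ k) : lowerShift n ^ k = 0 := by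
  ext i j
  rw [lowerShift_pow_apply, if_neg (by omega), Matrix.zero_apply]

lemma isNilpotent_lowerShift (n : ℕ) : IsNilpotent (lowerShift n) :=
  ⟨n, lowerShift_pow_eq_zero le_rfl⟩

lemma exp_smul_lowerShift_apply (n : ℕ) (t : ℝ) (i j : Fin n) :
    NormedSpace.exp (t • lowerShift n) i j =
      if (j : ℕ) ≤ i then t ^ ((i : ℕ) - j) / ((i : ℕ) - j).factorial else 0 := by
  rw [NormedSpace.exp_eq_tsum ℝ]
  beta_reduce
  rw [tsum_eq_sum (s := Finset.range n) fun k hk => by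
    rw [smul_pow, lowerShift_pow_eq_zero (by simpa using hk), smul_zero, smul_zero]]
  simp only [Matrix.sum_apply, Matrix.smul_apply, smul_pow, lowerShift_pow_apply, smul_eq_mul]
  split_ifs with h
  · rw [Finset.sum_eq_single ((i : ℕ) - j)]
    · rw [if_pos (by omega)]
      field_simp
    · exact fun k _ hk => by rw [if_neg (by omega)]; simp
    · simp [Finset.mem_range]; omega
  · exact Finset.sum_eq_zero fun k _ => by rw [if_neg (by omega)]; simp

def erlangGen (M : ℕ) (r : ℝ) : Matrix (Fin (M + 1)) (Fin (M + 1)) ℝ :=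
  r • (lowerShift (M + 1) - 1)

lemma erlangGen_apply (M : ℕ) (r : ℝ) (i j : Fin (M + 1)) :
    erlangGen M r i j = r * ((if (i : ℕ) = j + 1 then 1 else 0) - if i = j then 1 else 0) := by
  simp [erlangGen, lowerShift, Matrix.one_apply]

lemma exp_smul_erlangGen_apply_zero (M : ℕ) (r y : ℝ) (i : Fin (M + 1)) :
    NormedSpace.exp (y • erlangGen M r) i 0 =
      Real.exp (-(r * y)) * (r * y) ^ (i : ℕ) / (i : ℕ).factorial := by
  have hsplit : y • erlangGen M r =
      (-(r * y)) • (1 : Matrix _ _ ℝ) + (r * y) • lowerShift (M + 1) := by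
    rw [erlangGen, smul_smul, smul_sub]
    ext i j
    simp only [Matrix.sub_apply, Matrix.add_apply, Matrix.smul_apply, smul_eq_mul]
    ring
  rw [hsplit, Matrix.exp_add_of_commute _ _ (((Commute.one_left _).smul_left _).smul_right _),
    Matrix.smul_one_eq_diagonal, Matrix.exp_diagonal, Matrix.diagonal_mul,
    exp_smul_lowerShift_apply, Fin.val_zero, if_pos (Nat.zero_le _), Nat.sub_zero, Pi.coe_exp,
    Real.exp_eq_exp_ℝ, mul_div_assoc]

lemma neg_sum_erlangGen_apply (M : ℕ) (r : ℝ) (j : Fin (M + 1)) :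
    -∑ k, erlangGen M r j k = if j = 0 then r else 0 := by
  simp only [erlangGen_apply, ← Finset.mul_sum, Finset.sum_sub_distrib]
  rcases Fin.eq_zero_or_eq_succ j with rfl | ⟨l, rfl⟩
  · simp
  · rw [Finset.sum_eq_single l.castSucc
      (fun k _ hk => if_neg fun h => hk (Fin.ext (by simp at h ⊢; omega))) (by simp)]
    simp

lemma isPHRepr_erlangGen {M : ℕ} {r : ℝ} (hr : 0 < r) {piv : Fin (M + 1) → ℝ}
    (hpiv : ∀ i, 0 ≤ piv i) (hsum : ∑ i, piv i = 1) : IsPHRepr piv (erlangGen M r) where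
  pi_nonneg := hpiv
  pi_sum_one := hsum
  offdiag_nonneg i j hij := by
    rw [erlangGen_apply, if_neg hij]
    split_ifs <;> positivity
  rowsum_nonpos i := by
    have := neg_sum_erlangGen_apply M r i
    split_ifs at this <;> linarith
  eig_neg z hz := by
    have hT : (erlangGen M r).map (algebraMap ℝ ℂ) =
        algebraMap ℂ _ (-(r : ℂ)) + (r : ℂ) • (lowerShift (M + 1)).map (algebraMap ℝ ℂ) := by
      ext i j
      simp only [Matrix.map_apply, erlangGen_apply, Matrix.add_apply, Matrix.smul_apply,
        Matrix.algebraMap_matrix_apply, lowerShift, Matrix.of_apply]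
      split_ifs <;> simp
    have hnil : IsNilpotent ((r : ℂ) • (lowerShift (M + 1)).map (algebraMap ℝ ℂ)) :=
      ((isNilpotent_lowerShift _).map (algebraMap ℝ ℂ).mapMatrix).smul _
    rw [hT, ← spectrum.singleton_add_eq] at hz
    obtain ⟨_, rfl, w, hw, rfl⟩ := hz
    rw [spectrum_subset_singleton_zero_of_isNilpotent hnil hw]
    simpa using hr

lemma phDens_erlangGen (M : ℕ) (r : ℝ) (piv : Fin (M + 1) → ℝ) {y : ℝ} (hy : 0 ≤ y) :
    phDens piv (erlangGen M r) y = ∑ i, piv i * gammaPDFReal ((i : ℕ) + 1) r y := by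
  simp only [phDens, neg_sum_erlangGen_apply, mul_ite, mul_zero, Finset.sum_ite_eq',
    Finset.mem_univ, if_true, exp_smul_erlangGen_apply_zero, gammaPDFReal_natCast_add_one _ _ hy]
  refine Finset.sum_congr rfl fun i _ => ?_
  ring

lemma phMeasure_erlangGen {M : ℕ} {r : ℝ} (hr : 0 < r) {piv : Fin (M + 1) → ℝ}
    (hpiv : ∀ i, 0 ≤ piv i) :
    phMeasure piv (erlangGen M r) = ∑ i, ENNReal.ofReal (piv i) • gammaMeasure ((i : ℕ) + 1) r := by
  ext s hs
  have hmeas (i : Fin (M + 1)) : Measurable (gammaPDF ((i : ℕ) + 1) r) :=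
    (measurable_gammaPDFReal _ _).ennreal_ofReal
  simp only [phMeasure, gammaMeasure, Measure.coe_finsetSum, Finset.sum_apply,
    Measure.smul_apply, withDensity_apply _ hs, smul_eq_mul, ← lintegral_const_mul _ (hmeas _)]
  rw [← lintegral_finsetSum _ fun i _ => (hmeas i).const_mul _]
  refine setLIntegral_congr_fun_ae hs ?_
  filter_upwards [Measure.ae_ne volume 0] with y hy _
  rcases hy.lt_or_gt with hneg | hpos
  · simp [if_neg hneg.not_gt, gammaPDF_of_neg hneg]
  · rw [if_pos hpos, phDens_erlangGen _ _ _ hpos.le, ENNReal.ofReal_sum_of_nonneg fun i _ =>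
      mul_nonneg (hpiv i) (gammaPDFReal_nonneg (by positivity) hr y)]
    simp only [ENNReal.ofReal_mul (hpiv _), gammaPDF]

lemma isProbabilityMeasure_phMeasure_erlangGen {M : ℕ} {r : ℝ} (hr : 0 < r)
    {piv : Fin (M + 1) → ℝ} (hpiv : ∀ i, 0 ≤ piv i) (hsum : ∑ i, piv i = 1) :
    IsProbabilityMeasure (phMeasure piv (erlangGen M r)) := by
  have (i : Fin (M + 1)) := isProbabilityMeasure_gammaMeasure (a := (i : ℕ) + 1) (by positivity) hr
  constructor
  simp only [phMeasure_erlangGen hr hpiv, Measure.coe_finsetSum, Finset.sum_apply,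
    Measure.smul_apply, smul_eq_mul, measure_univ, mul_one]
  rw [← ENNReal.ofReal_sum_of_nonneg fun i _ => hpiv i, hsum, ENNReal.ofReal_one]

lemma integral_phMeasure_erlangGen {M : ℕ} {r : ℝ} (hr : 0 < r) {piv : Fin (M + 1) → ℝ}
    (hpiv : ∀ i, 0 ≤ piv i) {g : ℝ → ℝ}
    (hg : ∀ i : Fin (M + 1), Integrable g (gammaMeasure ((i : ℕ) + 1) r)) :
    ∫ y, g y ∂phMeasure piv (erlangGen M r) =
      ∑ i, piv i * ∫ y, g y ∂gammaMeasure ((i : ℕ) + 1) r := by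
  rw [phMeasure_erlangGen hr hpiv,
    integral_finsetSum_measure fun i _ => (hg i).smul_measure ENNReal.ofReal_ne_top]
  simp [integral_smul_measure, ENNReal.toReal_ofReal (hpiv _)]

-- The cap `(n + 1) ^ 2` keeps the number of phases finite and is inactive once `x ≤ n`.
def erlangShape (n : ℕ) (x : ℝ) : Fin ((n + 1) ^ 2 + 1) :=
  Fin.clamp ⌊((n : ℝ) + 1) * x⌋₊ ((n + 1) ^ 2)

def erlangWeights (μ : Measure ℝ) (n : ℕ) (i : Fin ((n + 1) ^ 2 + 1)) : ℝ :=
  (μ.map (erlangShape n)).real {i}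

def erlangMixture (μ : Measure ℝ) (n : ℕ) : Measure ℝ :=
  phMeasure (erlangWeights μ n) (erlangGen ((n + 1) ^ 2) ((n : ℝ) + 1))

lemma measurable_erlangShape (n : ℕ) : Measurable (erlangShape n) :=
  (measurable_from_nat (f := fun k => Fin.clamp k ((n + 1) ^ 2))).comp
    (Nat.measurable_floor.comp (measurable_const_mul _))

variable {μ : Measure ℝ} [IsProbabilityMeasure μ]

lemma isPHRepr_erlangMixture (n : ℕ) :
    IsPHRepr (erlangWeights μ n) (erlangGen ((n + 1) ^ 2) ((n : ℝ) + 1)) := by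
  have := Measure.isProbabilityMeasure_map (μ := μ) (measurable_erlangShape n).aemeasurable
  refine isPHRepr_erlangGen (by positivity) (fun _ => measureReal_nonneg) ?_
  simp [erlangWeights]

instance (n : ℕ) : IsProbabilityMeasure (erlangMixture μ n) :=
  isProbabilityMeasure_phMeasure_erlangGen (by positivity) (isPHRepr_erlangMixture n).pi_nonneg
    (isPHRepr_erlangMixture n).pi_sum_one

lemma integral_erlangMixture (n : ℕ) (f : BoundedContinuousFunction ℝ ℝ) :
    ∫ y, f y ∂erlangMixture μ n =
      ∫ x, ∫ y, f y ∂gammaMeasure ((erlangShape n x : ℕ) + 1) ((n : ℝ) + 1) ∂μ := by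
  have := Measure.isProbabilityMeasure_map (μ := μ) (measurable_erlangShape n).aemeasurable
  have (i : Fin ((n + 1) ^ 2 + 1)) :=
    isProbabilityMeasure_gammaMeasure (a := (i : ℕ) + 1) (r := (n : ℝ) + 1) (by positivity)
      (by positivity)
  let G (i : Fin ((n + 1) ^ 2 + 1)) := ∫ y, f y ∂gammaMeasure ((i : ℕ) + 1) ((n : ℝ) + 1)
  rw [erlangMixture, integral_phMeasure_erlangGen (by positivity)
      (isPHRepr_erlangMixture n).pi_nonneg fun i => f.integrable _,
    ← integral_map (f := G) (measurable_erlangShape n).aemeasurable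
      Measurable.of_discrete.aestronglyMeasurable, integral_fintype Integrable.of_finite]
  rfl

lemma tendsto_integral_gammaMeasure_erlangShape {x : ℝ} (hx : 0 ≤ x)
    (f : BoundedContinuousFunction ℝ ℝ) :
    Tendsto (fun n : ℕ => ∫ y, f y ∂gammaMeasure ((erlangShape n x : ℕ) + 1) ((n : ℝ) + 1))
      atTop (𝓝 (f x)) := by
  have (n : ℕ) :=
    isProbabilityMeasure_gammaMeasure (a := (erlangShape n x : ℕ) + 1) (r := (n : ℝ) + 1)
      (by positivity) (by positivity)
  have hshape : ∀ᶠ n : ℕ in atTop, (erlangShape n x : ℕ) = ⌊((n : ℝ) + 1) * x⌋₊ := by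
    filter_upwards [eventually_ge_atTop ⌈x⌉₊] with n hn
    have hxn : x ≤ n := (Nat.le_ceil x).trans (by exact_mod_cast hn)
    rw [erlangShape, Fin.coe_clamp, min_eq_left (Nat.floor_le_of_le ?_)]
    push_cast
    nlinarith
  have hvar : Tendsto (fun n : ℕ => ∫ y, (y - x) ^ 2 ∂gammaMeasure ((erlangShape n x : ℕ) + 1)
      ((n : ℝ) + 1)) atTop (𝓝 0) := by
    refine squeeze_zero' (.of_forall fun n => integral_nonneg fun y => sq_nonneg _) ?_
      (by simpa using (tendsto_one_div_add_atTop_nhds_zero_nat (𝕜 := ℝ)).const_mul (x + 2))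
    filter_upwards [hshape] with n hn
    rw [hn, ← div_eq_mul_inv]
    exact integral_sq_sub_gammaMeasure_floor_le (by simp) hx
  have hconc := concentratesAt_of_tendsto_integral_sq_sub
    (fun n => integrable_sq_sub_gammaMeasure (by positivity) (by positivity) x) hvar
  exact hconc.tendsto_integral (B := ‖f‖) (fun y => by simpa using f.norm_coe_le_norm y)
    (fun _ => f.continuous.aestronglyMeasurable) f.continuous.continuousAt

lemma tendsto_integral_erlangMixture (hμ : ∀ᵐ x ∂μ, 0 ≤ x) (f : BoundedContinuousFunction ℝ ℝ) :
    Tendsto (fun n => ∫ y, f y ∂erlangMixture μ n) atTop (𝓝 (∫ x, f x ∂μ)) := by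
  simp_rw [integral_erlangMixture]
  refine tendsto_integral_of_dominated_convergence (fun _ => ‖f‖)
    (fun n => ((Measurable.of_discrete (f := fun i : Fin ((n + 1) ^ 2 + 1) =>
      ∫ y, f y ∂gammaMeasure ((i : ℕ) + 1) ((n : ℝ) + 1))).comp
        (measurable_erlangShape n)).aestronglyMeasurable)
    (integrable_const _) (fun n => ae_of_all _ fun x => ?_)
    (hμ.mono fun x hx => tendsto_integral_gammaMeasure_erlangShape hx f)
  have := isProbabilityMeasure_gammaMeasure (a := (erlangShape n x : ℕ) + 1) (r := (n : ℝ) + 1)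
    (by positivity) (by positivity)
  exact f.norm_integral_le_norm _

def cphLaws (C : Set (Measure ℝ)) : Set (ProbabilityMeasure ℝ) :=
  {ρ | ∃ (p : ℕ) (piv : Fin p → ℝ) (T : Matrix (Fin p) (Fin p) ℝ) (ν : Measure ℝ),
    ν ∈ C ∧ IsPHRepr piv T ∧ (ρ : Measure ℝ) = ((phMeasure piv T).prod ν).map fun q => q.1 / q.2}

lemma mem_closure_cphLaws {C : Set (Measure ℝ)} (hC : ∀ ν ∈ C, IsProbabilityMeasure ν) {c : ℝ}
    (hc : 0 < c) {ν₀ : ℕ → Measure ℝ} (hν₀ : ∀ m, ν₀ m ∈ C) (hν₀c : ConcentratesAt ν₀ atTop c)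
    (μ : ProbabilityMeasure ℝ) (hμ : ∀ᵐ x ∂(μ : Measure ℝ), 0 ≤ x) :
    μ ∈ closure (cphLaws C) := by
  have (m : ℕ) := hC _ (hν₀ m)
  let μc : ProbabilityMeasure ℝ := μ.map (measurable_const_mul c).aemeasurable
  have hμc : ∀ᵐ x ∂(μc : Measure ℝ), 0 ≤ x :=
    (ae_map_iff (by fun_prop) measurableSet_Ici).2 (hμ.mono fun x hx => mul_nonneg hc.le hx)
  let mix (n : ℕ) : ProbabilityMeasure ℝ := ⟨erlangMixture μc n, inferInstance⟩
  have hmix : Tendsto mix atTop (𝓝 μc) :=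
    ProbabilityMeasure.tendsto_iff_forall_integral_tendsto.2 (tendsto_integral_erlangMixture hμc)
  have hdiv : Continuous fun x : ℝ => x / c := by fun_prop
  have hμ : μc.map hdiv.measurable.aemeasurable = μ := by
    refine ProbabilityMeasure.toMeasure_injective ?_
    simp only [μc, ProbabilityMeasure.toMeasure_map]
    rw [Measure.map_map (by fun_prop) (by fun_prop)]
    convert Measure.map_id
    ext x
    simp [hc.ne']
  rw [← hμ, ← closure_closure]
  exact mem_closure_of_tendsto
    (ProbabilityMeasure.tendsto_map_of_tendsto_of_continuous _ _ hmix hdiv)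
    (.of_forall fun n => mem_closure_of_tendsto (tendsto_divLaw hc.ne' hν₀c)
      (.of_forall fun m => ⟨_, _, _, ν₀ m, hν₀ m, isPHRepr_erlangMixture n, rfl⟩))

end PhaseType

/-- if a family `C` of probability measures on `(0,∞)` contains a sequence
converging weakly to a Dirac mass at some `c > 0`, then the continuous scaled phase-type
laws built from `C` are weakly dense among probability measures on `(0,∞)`. -/
theorem cph_dense
    (C : Set (Measure ℝ))
    (hC : ∀ μ ∈ C, IsProbabilityMeasure μ ∧ μ (Set.Iic 0) = 0)
    (c : ℝ) (hc : 0 < c)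
    (ν₀ : ℕ → Measure ℝ) (hν₀ : ∀ n, ν₀ n ∈ C)
    (hdeg : ∀ f : BoundedContinuousFunction ℝ ℝ,
      Tendsto (fun n => ∫ x, f x ∂(ν₀ n)) atTop (𝓝 (f c)))
    (μ : Measure ℝ) [IsProbabilityMeasure μ] (hμ : μ (Set.Iic 0) = 0) :
    ∃ (d : ℕ → ℕ) (piv : ∀ n, Fin (d n) → ℝ)
      (T : ∀ n, Matrix (Fin (d n)) (Fin (d n)) ℝ) (ν : ℕ → Measure ℝ),
      (∀ n, ν n ∈ C) ∧ (∀ n, IsPHRepr (piv n) (T n)) ∧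
      ∀ f : BoundedContinuousFunction ℝ ℝ,
        Tendsto
          (fun n => ∫ q : ℝ × ℝ, f (q.1 / q.2) ∂((phMeasure (piv n) (T n)).prod (ν n)))
          atTop (𝓝 (∫ x, f x ∂μ)) := by
  have (n : ℕ) := (hC _ (hν₀ n)).1
  have hμ₀ : ∀ᵐ x ∂μ, 0 ≤ x := by
    simpa [ae_iff, ← Iio_def] using measure_mono_null Iio_subset_Iic_self hμ
  obtain ⟨ρ, hρD, hρ⟩ := mem_closure_iff_seq_limit.mp <|
    PhaseType.mem_closure_cphLaws (fun ν hν => (hC ν hν).1) hc hν₀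
      (concentratesAt_of_forall_tendsto_integral hdeg) ⟨μ, ‹_›⟩ hμ₀
  choose d piv T ν hνC hT hρν using hρD
  refine ⟨d, piv, T, ν, hνC, hT, fun f => ?_⟩
  simpa [hρν, integral_map_div] using ProbabilityMeasure.tendsto_iff_forall_integral_tendsto.mp hρ f
end
end

section
/- Fix α > 0 and a real η ≠ 0. Let p = e^{απ/η}/(1 + e^{απ/η}) and let Y be the hyperexponential (phase-type) random variable with density y ↦ p e^{−y} + (1−p) e^{−π/η} exp(−e^{−π/η} y) on (0,∞), i.e. Y ~ PH(π,T) with π = (p, 1−p) and T = diag(−1, −e^{−π/η}). Then the complex moment E[Y^{α+iη}] = ∫_0^∞ y^{α+iη} (p e^{−y} + (1−p) e^{−π/η} e^{−e^{−π/η} y}) dy equals 0. -/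
open MeasureTheory ProbabilityTheory Filter Matrix Set
open scoped Topology ENNReal

noncomputable section

/-! The density is a mixture of exponential densities, and the Mellin transform of the
exponential density of rate `r` is `E[Y^s] = r^{-s} Γ(s+1)`. With `s = α + iη` and the
second rate `λ = e^{-π/η}` this gives `λ^{-s} = e^{απ/η} e^{iπ} = -e^{απ/η}`, so
`E[Y^s] = (q - (1-q) e^{απ/η}) Γ(s+1)`, and the mixing weight `q` is chosen to make the
bracket vanish. -/

-- A non-integrable function has Bochner integral `0`; this one integrates to `(1/r)^a Γ(a) ≠ 0`.
lemma integrableOn_cpow_mul_exp_neg_mul_Ioi {a : ℂ} {r : ℝ} (ha : 0 < a.re) (hr : 0 < r) :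
    IntegrableOn (fun t : ℝ => (t : ℂ) ^ (a - 1) * Complex.exp (-(r * t))) (Ioi 0) := by
  refine Integrable.of_integral_ne_zero ?_
  rw [Complex.integral_cpow_mul_exp_neg_mul_Ioi ha hr]
  exact mul_ne_zero (by simp [Complex.cpow_eq_zero_iff, hr.ne'])
    (Complex.Gamma_ne_zero_of_re_pos ha)

lemma ofReal_mul_one_div_cpow_add_one {r : ℝ} (hr : 0 < r) (s : ℂ) :
    (r : ℂ) * (1 / r) ^ (s + 1) = (r : ℂ) ^ (-s) := by
  have hr' : (r : ℂ) ≠ 0 := Complex.ofReal_ne_zero.mpr hr.ne'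
  have harg : (r : ℂ).arg ≠ Real.pi := by
    rw [Complex.arg_ofReal_of_nonneg hr.le]; exact Real.pi_ne_zero.symm
  rw [Complex.cpow_add _ _ (one_div_ne_zero hr'), Complex.cpow_one, Complex.cpow_neg, one_div,
    Complex.inv_cpow _ _ harg]
  field_simp

lemma integral_cpow_mul_exponentialPDF_Ioi {s : ℂ} (hs : -1 < s.re) {r : ℝ} (hr : 0 < r) :
    ∫ t in Ioi (0 : ℝ), (t : ℂ) ^ s * (r * Complex.exp (-(r * t)))
      = (r : ℂ) ^ (-s) * Complex.Gamma (s + 1) := by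
  have ha : 0 < (s + 1).re := by rw [Complex.add_re, Complex.one_re]; linarith
  have h := Complex.integral_cpow_mul_exp_neg_mul_Ioi ha hr
  rw [add_sub_cancel_right] at h
  simp_rw [mul_left_comm _ (r : ℂ), integral_const_mul, h, ← mul_assoc,
    ofReal_mul_one_div_cpow_add_one hr]

lemma integral_cpow_mul_hyperexponentialPDF_Ioi {ι : Type*} [Fintype ι] (p r : ι → ℝ)
    (hr : ∀ i, 0 < r i) {s : ℂ} (hs : -1 < s.re) :
    ∫ t in Ioi (0 : ℝ), (t : ℂ) ^ s * ∑ i, (p i : ℂ) * (r i * Complex.exp (-(r i * t)))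
      = (∑ i, (p i : ℂ) * (r i : ℂ) ^ (-s)) * Complex.Gamma (s + 1) := by
  have ha : 0 < (s + 1).re := by rw [Complex.add_re, Complex.one_re]; linarith
  simp_rw [Finset.mul_sum, Finset.sum_mul]
  rw [integral_finsetSum]
  · refine Finset.sum_congr rfl fun i _ => ?_
    simp_rw [mul_left_comm _ (p i : ℂ), integral_const_mul,
      integral_cpow_mul_exponentialPDF_Ioi hs (hr i), mul_assoc]
  · intro i _
    have h := (integrableOn_cpow_mul_exp_neg_mul_Ioi ha (hr i)).const_mul ((p i : ℂ) * r i)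
    rw [add_sub_cancel_right] at h
    exact IntegrableOn.congr_fun h (fun t _ => by ring) measurableSet_Ioi

lemma ofReal_exp_cpow (x : ℝ) (s : ℂ) : (Real.exp x : ℂ) ^ s = Complex.exp (x * s) := by
  rw [Complex.cpow_def_of_ne_zero (Complex.ofReal_ne_zero.mpr (Real.exp_pos x).ne'),
    ← Complex.ofReal_log (Real.exp_pos x).le, Real.log_exp]

/-- for the hyperexponential distribution with mixing weight
`q = e^{απ/η}/(1+e^{απ/η})` and rates `1` and `e^{-π/η}`, the complex moment
`E[Y^{α+iη}]` vanishes. -/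
theorem hyperexp_complex_moment_zero
    (α η : ℝ) (hα : 0 < α) (hη : η ≠ 0)
    (q : ℝ)
    (hq : q = Real.exp (α * Real.pi / η) / (1 + Real.exp (α * Real.pi / η))) :
    (∫ y in Set.Ioi (0 : ℝ),
        (y : ℂ) ^ ((α : ℂ) + (η : ℂ) * Complex.I) *
          ((q * Real.exp (-y) +
              (1 - q) * Real.exp (-(Real.pi / η)) *
                Real.exp (-(Real.exp (-(Real.pi / η)) * y)) : ℝ) : ℂ))
      = 0 := by
  set lam := Real.exp (-(Real.pi / η))
  set s : ℂ := (α : ℂ) + (η : ℂ) * Complex.I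
  have hs : -1 < s.re := by simpa [s] using neg_one_lt_zero.trans hα
  have hlam : (lam : ℂ) ^ (-s) = -Real.exp (α * Real.pi / η) := by
    have hηc : (η : ℂ) ≠ 0 := Complex.ofReal_ne_zero.mpr hη
    rw [ofReal_exp_cpow, Complex.ofReal_exp,
      show (↑(-(Real.pi / η)) : ℂ) * -s = ↑(α * Real.pi / η) + Real.pi * Complex.I by
        push_cast [s]; field_simp,
      Complex.exp_add, Complex.exp_pi_mul_I, mul_neg_one]
  have hmix := integral_cpow_mul_hyperexponentialPDF_Ioi ![q, 1 - q] ![1, lam]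
    (Fin.forall_fin_two.mpr ⟨one_pos, Real.exp_pos _⟩) hs
  simp only [Fin.sum_univ_two, Matrix.cons_val_zero, Matrix.cons_val_one, hlam] at hmix
  convert hmix using 1
  · refine setIntegral_congr_fun measurableSet_Ioi fun y _ => ?_
    push_cast
    ring_nf
  · have hE : 1 + Real.exp (α * Real.pi / η) ≠ 0 := by positivity
    have hweights : (q : ℂ) - ((1 - q : ℝ) : ℂ) * Real.exp (α * Real.pi / η) = 0 := by
      rw [← Complex.ofReal_mul, ← Complex.ofReal_sub, hq]; field_simp; simp
    rw [Complex.ofReal_one, Complex.one_cpow]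
    linear_combination (-Complex.Gamma (s + 1)) * hweights
end
end

section
/- Let V be a nonnegative random variable with long-tailed distribution function F_V ∈ L, and let Y ~ PH(π,T) be a phase-type distributed random variable independent of V. Then for every b > 0, the survival function of Y is negligible compared to that of the product VY along the scaling b: F̄_Y(x)/F̄_{VY}(bx) → 0 as x → ∞, i.e. F̄_Y(x) = o(F̄_{VY}(bx)). -/
open MeasureTheory ProbabilityTheory Filter Matrix Set
open scoped Topology ENNReal

noncomputable section

/-!
A phase-type tail decays exponentially, whereas a long-tailed tail decays more slowly than every
exponential, and independence passes the latter on to the product.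

`T` is a Metzler matrix with nonpositive row sums, so `exp (y • T)` is entrywise nonnegative with
row sums at most `1`; since `T` is invertible, every row sum eventually drops below `1`, and
submultiplicativity of the `∞`-operator norm gives `‖exp (y • T)‖ ≤ C e^{-δy}`, hence
`F̄_Y(x) = O(e^{-δx})`. Long-tailedness gives `F̄_V(x) ≥ e^{-ε} F̄_V(x - 1)` for large `x`, hence
`e^{-εx} = O(F̄_V(x))` for every `ε > 0`. Finally, for `y₁ > 0` with `P(Y > y₁) > 0`,
`F̄_{VY}(bx) ≥ P(Y > y₁) F̄_V(bx / y₁)`, which is of order at least `e^{-δx/2}` for suitable `ε`.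
-/

open Asymptotics

theorem exists_le_mul_exp_neg_of_submultiplicative {g : ℝ → ℝ}
    (hg0 : ∀ t, 0 ≤ t → 0 ≤ g t) (hg1 : ∀ t, 0 ≤ t → g t ≤ 1)
    (hmul : ∀ s t, 0 ≤ s → 0 ≤ t → g (s + t) ≤ g s * g t)
    {t₀ : ℝ} (ht₀ : 0 < t₀) (hlt : g t₀ < 1) :
    ∃ δ > 0, ∃ C, ∀ t, 0 ≤ t → g t ≤ C * Real.exp (-δ * t) := by
  -- `g t₀` itself may vanish, and `Real.log 0 = 0`.
  set q := max (g t₀) (1 / 2)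
  have hq0 : 0 < q := lt_max_of_lt_right one_half_pos
  have hq1 : q < 1 := max_lt hlt one_half_lt_one
  have hlog : Real.log q < 0 := Real.log_neg hq0 hq1
  have hpow (k : ℕ) : ∀ r, 0 ≤ r → g (k * t₀ + r) ≤ q ^ k := by
    induction k with
    | zero => simpa using hg1
    | succ k ih =>
      intro r hr
      calc g ((k + 1 : ℕ) * t₀ + r) = g (t₀ + (k * t₀ + r)) := by push_cast; ring_nf
        _ ≤ g t₀ * g (k * t₀ + r) := hmul _ _ ht₀.le (by positivity)
        _ ≤ q * q ^ k := mul_le_mul (le_max_left _ _) (ih r hr) (hg0 _ (by positivity)) hq0.le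
        _ = q ^ (k + 1) := (pow_succ' q k).symm
  refine ⟨-Real.log q / t₀, div_pos (neg_pos.2 hlog) ht₀, q⁻¹, fun t ht => ?_⟩
  set k := ⌊t / t₀⌋₊
  have hk : k * t₀ ≤ t := (le_div_iff₀ ht₀).1 (Nat.floor_le (div_nonneg ht ht₀.le))
  have hk' : t / t₀ - 1 ≤ k := by linarith [Nat.lt_floor_add_one (t / t₀)]
  calc g t = g (k * t₀ + (t - k * t₀)) := by ring_nf
    _ ≤ q ^ k := hpow k _ (sub_nonneg.2 hk)
    _ = Real.exp (k * Real.log q) := by rw [Real.exp_nat_mul, Real.exp_log hq0]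
    _ ≤ Real.exp ((t / t₀ - 1) * Real.log q) :=
      Real.exp_le_exp.2 (mul_le_mul_of_nonpos_right hk' hlog.le)
    _ = q⁻¹ * Real.exp (-(-Real.log q / t₀) * t) := by
      rw [← Real.exp_log hq0, ← Real.exp_neg, Real.log_exp, ← Real.exp_add]
      congr 1
      field_simp
      ring

theorem exp_neg_mul_isBigO_of_tendsto_div {G : ℝ → ℝ} (hanti : Antitone G)
    (hpos : ∀ x, 0 < G x) (hlim : Tendsto (fun x => G (x - 1) / G x) atTop (𝓝 1)) {ε : ℝ}
    (hε : 0 < ε) : (fun x => Real.exp (-ε * x)) =O[atTop] G := by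
  obtain ⟨x₀, hx₀⟩ :=
    eventually_atTop.1 (hlim.eventually_lt_const (Real.one_lt_exp_iff.2 hε))
  -- `h` grows along unit steps beyond `x₀`, so it is bounded below by its values on
  -- `[x₀, x₀ + 1]`.
  set h := fun x => Real.exp (ε * x) * G x
  have hstep (x : ℝ) (hx : x₀ ≤ x) : h (x - 1) ≤ h x := by
    have hG : G (x - 1) ≤ Real.exp ε * G x := ((div_lt_iff₀ (hpos x)).1 (hx₀ x hx)).le
    calc h (x - 1) ≤ Real.exp (ε * (x - 1)) * (Real.exp ε * G x) :=
          mul_le_mul_of_nonneg_left hG (Real.exp_pos _).le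
      _ = h x := by simp only [h]; rw [← mul_assoc, ← Real.exp_add]; ring_nf
  have hiter (k : ℕ) : ∀ x, x₀ + k ≤ x → h (x - k) ≤ h x := by
    induction k with
    | zero => simp
    | succ k ih =>
      intro x hx
      push_cast at hx ⊢
      calc h (x - (k + 1)) = h (x - k - 1) := by ring_nf
        _ ≤ h (x - k) := hstep _ (by linarith)
        _ ≤ h x := ih x (by linarith)
  set c := Real.exp (ε * x₀) * G (x₀ + 1)
  have hc : 0 < c := mul_pos (Real.exp_pos _) (hpos _)
  refine IsBigO.of_bound c⁻¹ ?_
  filter_upwards [eventually_ge_atTop x₀] with x hx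
  set k := ⌊x - x₀⌋₊
  have hk : x₀ + k ≤ x := by linarith [Nat.floor_le (sub_nonneg.2 hx)]
  have hk' : x - k < x₀ + 1 := by linarith [Nat.lt_floor_add_one (x - x₀)]
  have hlow : c ≤ h x := (mul_le_mul
    (Real.exp_le_exp.2 (mul_le_mul_of_nonneg_left (by linarith) hε.le))
    (hanti hk'.le) (hpos _).le (Real.exp_pos _).le).trans (hiter k x hk)
  rw [Real.norm_of_nonneg (Real.exp_pos _).le, Real.norm_of_nonneg (hpos x).le,
    le_inv_mul_iff₀ hc]
  calc c * Real.exp (-ε * x) ≤ h x * Real.exp (-ε * x) :=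
        mul_le_mul_of_nonneg_right hlow (Real.exp_pos _).le
    _ = G x := by
      simp only [h]
      rw [mul_right_comm, ← Real.exp_add, neg_mul, add_neg_cancel, Real.exp_zero, one_mul]

theorem withDensity_Ioi_le_of_le_exp {f : ℝ → ℝ≥0∞} {x C δ : ℝ} (hC : 0 ≤ C)
    (hδ : 0 < δ) (hf : ∀ y, x < y → f y ≤ ENNReal.ofReal (C * Real.exp (-δ * y))) :
    volume.withDensity f (Ioi x) ≤ ENNReal.ofReal (C / δ * Real.exp (-δ * x)) := by
  have hint : IntegrableOn (fun y => C * Real.exp (-δ * y)) (Ioi x) :=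
    (exp_neg_integrableOn_Ioi x hδ).const_mul C
  rw [withDensity_apply _ measurableSet_Ioi]
  calc ∫⁻ y in Ioi x, f y
      ≤ ∫⁻ y in Ioi x, ENNReal.ofReal (C * Real.exp (-δ * y)) :=
        setLIntegral_mono (by fun_prop) hf
    _ = ENNReal.ofReal (∫ y in Ioi x, C * Real.exp (-δ * y)) :=
        (ofReal_integral_eq_lintegral_ofReal hint (ae_of_all _ fun y => by positivity)).symm
    _ = ENNReal.ofReal (C / δ * Real.exp (-δ * x)) := by
        rw [integral_const_mul, integral_exp_mul_Ioi (neg_lt_zero.2 hδ), neg_div_neg_eq]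
        ring_nf

theorem exists_gt_measure_Ioi_ne_zero {ν : Measure ℝ} {a : ℝ} (h : ν (Ioi a) ≠ 0) :
    ∃ b > a, ν (Ioi b) ≠ 0 := by
  by_contra! hzero
  obtain ⟨u, hanti, hgt, hlim⟩ := exists_seq_strictAnti_tendsto a
  refine h ?_
  rw [← iUnion_Ici_eq_Ioi_of_lt_of_tendsto hgt hlim]
  exact measure_iUnion_null fun k =>
    measure_mono_null (Ici_subset_Ioi.2 (hanti k.lt_succ_self)) (hzero _ (hgt _))

theorem ProbabilityTheory.IndepFun.measure_Ioi_mul_measure_Ioi_le {Ω : Type*}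
    [MeasurableSpace Ω] {μ : Measure Ω} {V Y : Ω → ℝ} (h : IndepFun V Y μ) {a c : ℝ}
    (ha : 0 ≤ a) (hc : 0 ≤ c) :
    μ (V ⁻¹' Ioi a) * μ (Y ⁻¹' Ioi c) ≤ μ {ω | a * c < V ω * Y ω} := by
  rw [← h.measure_inter_preimage_eq_mul _ _ measurableSet_Ioi measurableSet_Ioi]
  exact measure_mono fun ω ⟨hV, hY⟩ => mul_lt_mul'' hV hY ha hc

theorem ProbabilityTheory.IndepFun.measure_Ioi_div_isBigO_measure_mul_gt {Ω : Type*}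
    [MeasurableSpace Ω] {μ : Measure Ω} [IsFiniteMeasure μ] {V Y : Ω → ℝ}
    (h : IndepFun V Y μ) {c : ℝ} (hc : 0 < c) (hY : μ (Y ⁻¹' Ioi c) ≠ 0) :
    (fun z => (μ (V ⁻¹' Ioi (z / c))).toReal) =O[atTop]
      fun z => (μ {ω | z < V ω * Y ω}).toReal := by
  have hq : 0 < (μ (Y ⁻¹' Ioi c)).toReal := ENNReal.toReal_pos hY (measure_ne_top _ _)
  refine IsBigO.of_bound (μ (Y ⁻¹' Ioi c)).toReal⁻¹ ?_
  filter_upwards [eventually_ge_atTop 0] with z hz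
  have hprod := h.measure_Ioi_mul_measure_Ioi_le (div_nonneg hz hc.le) hc.le
  rw [div_mul_cancel₀ _ hc.ne'] at hprod
  rw [Real.norm_of_nonneg ENNReal.toReal_nonneg, Real.norm_of_nonneg ENNReal.toReal_nonneg,
    le_inv_mul_iff₀ hq, mul_comm, ← ENNReal.toReal_mul]
  exact ENNReal.toReal_mono (measure_ne_top _ _) hprod

namespace Matrix

open NormedSpace

section LinftyOp

attribute [local instance] Matrix.linftyOpNormedAddCommGroup Matrix.linftyOpNormedRing
  Matrix.linftyOpNormedAlgebra

variable {m n : Type*} [Fintype m] [Fintype n]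

theorem abs_rowSum_le_linfty_opNorm (A : Matrix m n ℝ) (i : m) : |∑ j, A i j| ≤ ‖A‖ := by
  rw [linfty_opNorm_def]
  refine (Finset.abs_sum_le_sum_abs _ _).trans ?_
  have h := Finset.le_sup (f := fun i => ∑ j, ‖A i j‖₊) (Finset.mem_univ i)
  rw [← NNReal.coe_le_coe, NNReal.coe_sum] at h
  simpa only [coe_nnnorm, Real.norm_eq_abs] using h

theorem abs_apply_le_linfty_opNorm (A : Matrix m n ℝ) (i : m) (j : n) : |A i j| ≤ ‖A‖ := by
  rw [linfty_opNorm_def]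
  have hrow := Finset.le_sup (f := fun i => ∑ j, ‖A i j‖₊) (Finset.mem_univ i)
  have hentry := Finset.single_le_sum (f := fun j => ‖A i j‖₊) (fun _ _ => zero_le)
    (Finset.mem_univ j)
  exact_mod_cast hentry.trans hrow

theorem linfty_opNorm_le_of_nonneg {A : Matrix m n ℝ} (hA : ∀ i j, 0 ≤ A i j) {r : ℝ}
    (hr : 0 ≤ r) (h : ∀ i, ∑ j, A i j ≤ r) : ‖A‖ ≤ r := by
  rw [linfty_opNorm_def, ← NNReal.coe_mk r hr, NNReal.coe_le_coe, Finset.sup_le_iff]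
  intro i _
  rw [← NNReal.coe_le_coe, NNReal.coe_sum, NNReal.coe_mk]
  simpa only [coe_nnnorm, Real.norm_of_nonneg (hA i _)] using h i

theorem linfty_opNorm_lt_of_nonneg {A : Matrix m n ℝ} (hA : ∀ i j, 0 ≤ A i j) {r : ℝ}
    (hr : 0 < r) (h : ∀ i, ∑ j, A i j < r) : ‖A‖ < r := by
  rw [linfty_opNorm_def, ← NNReal.coe_mk r hr.le, NNReal.coe_lt_coe,
    Finset.sup_lt_iff (by exact hr)]
  intro i _
  rw [← NNReal.coe_lt_coe, NNReal.coe_sum, NNReal.coe_mk]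
  simpa only [coe_nnnorm, Real.norm_of_nonneg (hA i _)] using h i

variable [DecidableEq n]

theorem exp_apply_nonneg {A : Matrix n n ℝ} (hA : ∀ i j, 0 ≤ A i j) (i j : n) :
    0 ≤ exp A i j := by
  have hsum : HasSum (fun k : ℕ => (k.factorial : ℝ)⁻¹ • A ^ k) (exp A) := by
    rw [exp_eq_tsum ℝ]
    exact (expSeries_summable' A).hasSum
  rw [← ((Pi.hasSum.1 hsum i |> Pi.hasSum.1) j).tsum_eq]
  exact tsum_nonneg fun k => by
    rw [smul_apply, smul_eq_mul]
    exact mul_nonneg (by positivity) (pow_apply_nonneg hA k i j)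

theorem exp_smul_add_smul_one (T : Matrix n n ℝ) (y c : ℝ) :
    exp (y • (T + c • 1)) = Real.exp (y * c) • exp (y • T) := by
  have hcomm : Commute (y • T) ((y * c) • (1 : Matrix n n ℝ)) :=
    ((Commute.one_right T).smul_right (y * c)).smul_left y
  have hscalar : exp ((y * c) • (1 : Matrix n n ℝ)) = Real.exp (y * c) • 1 := by
    rw [← Algebra.algebraMap_eq_smul_one, ← Algebra.algebraMap_eq_smul_one, Real.exp_eq_exp_ℝ]
    exact (algebraMap_exp_comm _).symm
  rw [smul_add, smul_smul, Matrix.exp_add_of_commute _ _ hcomm, hscalar, mul_smul_one]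

theorem exp_smul_apply_nonneg {T : Matrix n n ℝ} (hT : ∀ i j, i ≠ j → 0 ≤ T i j) {y : ℝ}
    (hy : 0 ≤ y) (i j : n) : 0 ≤ exp (y • T) i j := by
  -- Adding `c • 1` makes `T` entrywise nonnegative and only rescales the exponential.
  set c := ∑ k, |T k k|
  have hshift : ∀ i j, 0 ≤ (y • (T + c • 1)) i j := by
    intro i j
    refine mul_nonneg hy ?_
    rcases eq_or_ne i j with rfl | hij
    · have : -T i i ≤ c := (neg_le_abs _).trans
        (Finset.single_le_sum (f := fun k => |T k k|) (fun k _ => abs_nonneg _) (Finset.mem_univ i))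
      simp only [add_apply, smul_apply, one_apply_eq, smul_eq_mul, mul_one]
      linarith
    · simpa [one_apply_ne hij] using hT i j hij
  have h := exp_apply_nonneg hshift i j
  rw [exp_smul_add_smul_one, smul_apply, smul_eq_mul] at h
  exact (mul_nonneg_iff_of_pos_left (Real.exp_pos _)).1 h

theorem hasDerivAt_rowSum_exp_smul_mul (T B : Matrix n n ℝ) (i : n) (y : ℝ) :
    HasDerivAt (fun s : ℝ => ∑ j, (exp (s • T) * B) i j)
      (∑ j, (exp (y • T) * T * B) i j) y :=
  HasDerivAt.fun_sum fun j _ =>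
    (LinearMap.toContinuousLinearMap (entryLinearMap ℝ ℝ i j)).hasFDerivAt.comp_hasDerivAt y
      ((hasDerivAt_exp_smul_const T y).mul_const B)

theorem antitoneOn_rowSum_exp_smul {T : Matrix n n ℝ} (hT : ∀ i j, i ≠ j → 0 ≤ T i j)
    (hrow : ∀ i, ∑ j, T i j ≤ 0) (i : n) :
    AntitoneOn (fun y : ℝ => ∑ j, exp (y • T) i j) (Ici 0) := by
  have hderiv (y : ℝ) : HasDerivAt (fun s : ℝ => ∑ j, exp (s • T) i j)
      (∑ k, exp (y • T) i k * ∑ j, T k j) y := by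
    have h := hasDerivAt_rowSum_exp_smul_mul T 1 i y
    simp only [Matrix.mul_one] at h
    convert h using 1
    simp only [mul_apply, Finset.mul_sum]
    exact Finset.sum_comm
  refine antitoneOn_of_hasDerivWithinAt_nonpos (convex_Ici 0)
    (fun y _ => (hderiv y).continuousAt.continuousWithinAt)
    (fun y _ => (hderiv y).hasDerivWithinAt) fun y hy => ?_
  rw [interior_Ici] at hy
  exact Finset.sum_nonpos fun k _ =>
    mul_nonpos_of_nonneg_of_nonpos (exp_smul_apply_nonneg hT (le_of_lt hy) i k) (hrow k)

theorem rowSum_exp_smul_le_one {T : Matrix n n ℝ} (hT : ∀ i j, i ≠ j → 0 ≤ T i j)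
    (hrow : ∀ i, ∑ j, T i j ≤ 0) (i : n) {y : ℝ} (hy : 0 ≤ y) :
    ∑ j, exp (y • T) i j ≤ 1 := by
  simpa [one_apply] using antitoneOn_rowSum_exp_smul hT hrow i self_mem_Ici hy hy

theorem norm_exp_smul_le_one {T : Matrix n n ℝ} (hT : ∀ i j, i ≠ j → 0 ≤ T i j)
    (hrow : ∀ i, ∑ j, T i j ≤ 0) {y : ℝ} (hy : 0 ≤ y) : ‖exp (y • T)‖ ≤ 1 :=
  linfty_opNorm_le_of_nonneg (exp_smul_apply_nonneg hT hy) zero_le_one fun i =>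
    rowSum_exp_smul_le_one hT hrow i hy

theorem exists_rowSum_exp_smul_lt_one {T : Matrix n n ℝ} (hT : ∀ i j, i ≠ j → 0 ≤ T i j)
    (hrow : ∀ i, ∑ j, T i j ≤ 0) (hdet : IsUnit T.det) (i : n) :
    ∃ y : ℝ, 0 < y ∧ ∑ j, exp (y • T) i j < 1 := by
  by_contra! h
  -- `f' ≥ 1` on `[0, ∞)`, yet `f` stays bounded there.
  set f : ℝ → ℝ := fun s => ∑ j, (exp (s • T) * T⁻¹) i j
  have hf (y : ℝ) : HasDerivAt f (∑ j, exp (y • T) i j) y := by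
    simpa [Matrix.mul_assoc, mul_nonsing_inv T hdet] using
      hasDerivAt_rowSum_exp_smul_mul T T⁻¹ i y
  have hbound {s : ℝ} (hs : 0 ≤ s) : |f s| ≤ ‖T⁻¹‖ :=
    (abs_rowSum_le_linfty_opNorm _ i).trans <| (norm_mul_le _ _).trans <|
      mul_le_of_le_one_left (norm_nonneg _) (norm_exp_smul_le_one hT hrow hs)
  set y := 2 * ‖T⁻¹‖ + 1
  have hy : 0 ≤ y := by positivity
  have hgrowth : 1 * (y - 0) ≤ f y - f 0 :=
    (convex_Ici 0).mul_sub_le_image_sub_of_le_deriv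
      (fun s _ => (hf s).continuousAt.continuousWithinAt)
      (fun s _ => (hf s).differentiableAt.differentiableWithinAt)
      (fun s hs => by rw [(hf s).deriv]; exact h s (by simpa using hs))
      0 self_mem_Ici y hy hy
  linarith [abs_le.1 (hbound le_rfl), abs_le.1 (hbound hy)]

theorem exists_norm_exp_smul_lt_one {T : Matrix n n ℝ} (hT : ∀ i j, i ≠ j → 0 ≤ T i j)
    (hrow : ∀ i, ∑ j, T i j ≤ 0) (hdet : IsUnit T.det) :
    ∃ y : ℝ, 0 < y ∧ ‖exp (y • T)‖ < 1 := by
  choose y hy_pos hy_lt using exists_rowSum_exp_smul_lt_one hT hrow hdet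
  have hsum : 0 ≤ ∑ i, y i := Finset.sum_nonneg fun i _ => (hy_pos i).le
  have hpos : 0 < 1 + ∑ i, y i := add_pos_of_pos_of_nonneg one_pos hsum
  refine ⟨_, hpos, linfty_opNorm_lt_of_nonneg (exp_smul_apply_nonneg hT hpos.le) one_pos
    fun i => ?_⟩
  have hle : y i ≤ 1 + ∑ i, y i := by
    linarith [Finset.single_le_sum (fun k _ => (hy_pos k).le) (Finset.mem_univ i)]
  exact (antitoneOn_rowSum_exp_smul hT hrow i (hy_pos i).le hpos.le hle).trans_lt
    (hy_lt i)

theorem exists_abs_exp_smul_apply_le {T : Matrix n n ℝ} (hT : ∀ i j, i ≠ j → 0 ≤ T i j)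
    (hrow : ∀ i, ∑ j, T i j ≤ 0) (hdet : IsUnit T.det) :
    ∃ δ > 0, ∃ C, ∀ t, 0 ≤ t → ∀ i j, |exp (t • T) i j| ≤ C * Real.exp (-δ * t) := by
  obtain ⟨t₀, ht₀, hlt⟩ := exists_norm_exp_smul_lt_one hT hrow hdet
  have hmul (s t : ℝ) (_ : 0 ≤ s) (_ : 0 ≤ t) :
      ‖exp ((s + t) • T)‖ ≤ ‖exp (s • T)‖ * ‖exp (t • T)‖ := by
    rw [add_smul, Matrix.exp_add_of_commute _ _ (((Commute.refl T).smul_left s).smul_right t)]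
    exact norm_mul_le _ _
  obtain ⟨δ, hδ, C, hC⟩ := exists_le_mul_exp_neg_of_submultiplicative
    (fun t _ => norm_nonneg (exp (t • T))) (fun t => norm_exp_smul_le_one hT hrow) hmul ht₀ hlt
  exact ⟨δ, hδ, C, fun t ht i j => (abs_apply_le_linfty_opNorm _ i j).trans (hC t ht)⟩

end LinftyOp

end Matrix

namespace IsPHRepr

variable {p : ℕ} {piv : Fin p → ℝ} {T : Matrix (Fin p) (Fin p) ℝ}

theorem isUnit_det (hPH : IsPHRepr piv T) : IsUnit T.det := by
  have h0 : (0 : ℂ) ∉ spectrum ℂ (T.map (algebraMap ℝ ℂ)) := fun h =>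
    (lt_irrefl 0) (by simpa using hPH.eig_neg 0 h)
  rwa [spectrum.zero_mem_iff, not_not, Matrix.isUnit_iff_isUnit_det, ← RingHom.mapMatrix_apply,
    ← RingHom.map_det, isUnit_map_iff] at h0

theorem exists_phDens_le (hPH : IsPHRepr piv T) :
    ∃ δ > 0, ∃ C, ∀ y, 0 ≤ y → phDens piv T y ≤ C * Real.exp (-δ * y) := by
  obtain ⟨δ, hδ, C, hC⟩ := Matrix.exists_abs_exp_smul_apply_le hPH.offdiag_nonneg
    hPH.rowsum_nonpos hPH.isUnit_det
  refine ⟨δ, hδ, C * ∑ i, ∑ j, |piv i| * |∑ k, T j k|, fun y hy => ?_⟩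
  calc phDens piv T y
      ≤ ∑ i, ∑ j, |piv i| * |NormedSpace.exp (y • T) i j| * |∑ k, T j k| := by
        refine (le_abs_self _).trans <| (Finset.abs_sum_le_sum_abs _ _).trans <|
          Finset.sum_le_sum fun i _ => (Finset.abs_sum_le_sum_abs _ _).trans_eq ?_
        simp only [abs_mul, abs_neg]
    _ ≤ ∑ i, ∑ j, |piv i| * (C * Real.exp (-δ * y)) * |∑ k, T j k| := by
        gcongr with i _ j _
        exact hC y hy i j
    _ = (C * ∑ i, ∑ j, |piv i| * |∑ k, T j k|) * Real.exp (-δ * y) := by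
        simp only [Finset.mul_sum, Finset.sum_mul]
        exact Finset.sum_congr rfl fun i _ => Finset.sum_congr rfl fun j _ => by ring

theorem phMeasure_Ioi_isBigO (hPH : IsPHRepr piv T) :
    ∃ δ > 0, (fun x => (phMeasure piv T (Ioi x)).toReal) =O[atTop]
      fun x => Real.exp (-δ * x) := by
  obtain ⟨δ, hδ, C, hC⟩ := hPH.exists_phDens_le
  set C' := max C 0
  refine ⟨δ, hδ, IsBigO.of_bound (C' / δ) ?_⟩
  filter_upwards [eventually_ge_atTop 0] with x hx
  have htail : phMeasure piv T (Ioi x) ≤ ENNReal.ofReal (C' / δ * Real.exp (-δ * x)) := by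
    refine withDensity_Ioi_le_of_le_exp (le_max_right C 0) hδ fun y hy => ?_
    rw [if_pos (hx.trans_lt hy)]
    exact ENNReal.ofReal_le_ofReal <| (hC y (hx.trans hy.le)).trans <|
      mul_le_mul_of_nonneg_right (le_max_left C 0) (Real.exp_pos _).le
  rw [Real.norm_of_nonneg ENNReal.toReal_nonneg, Real.norm_of_nonneg (Real.exp_pos _).le]
  exact ENNReal.toReal_le_of_le_ofReal (by positivity) htail

end IsPHRepr

theorem phMeasure_Iic_zero {p : ℕ} (piv : Fin p → ℝ) (T : Matrix (Fin p) (Fin p) ℝ) :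
    phMeasure piv T (Iic 0) = 0 := by
  rw [phMeasure, withDensity_apply _ measurableSet_Iic,
    setLIntegral_congr_fun measurableSet_Iic fun y hy => if_neg (not_lt.2 hy)]
  exact lintegral_zero

theorem LongTailed.exp_neg_mul_isBigO {μ : Measure ℝ} [IsFiniteMeasure μ] (h : LongTailed μ)
    {ε : ℝ} (hε : 0 < ε) :
    (fun x => Real.exp (-ε * x)) =O[atTop] fun x => (μ (Ioi x)).toReal :=
  exp_neg_mul_isBigO_of_tendsto_div
    (fun _ _ hxy => ENNReal.toReal_mono (measure_ne_top _ _) (measure_mono (Ioi_subset_Ioi hxy)))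
    (fun x => ENNReal.toReal_pos (h.1 x).ne' (measure_ne_top _ _)) (h.2 1) hε

theorem ph_tail_negligible_of_longTailed_general
    {Ω : Type*} [MeasureSpace Ω] [IsProbabilityMeasure (ℙ : Measure Ω)]
    {p : ℕ} (piv : Fin p → ℝ) (T : Matrix (Fin p) (Fin p) ℝ) (hPH : IsPHRepr piv T)
    (V Y : Ω → ℝ) (hVm : Measurable V) (hYm : Measurable Y)
    (hInd : IndepFun V Y ℙ)
    (hVlong : LongTailed (Measure.map V ℙ))
    (hYlaw : Measure.map Y ℙ = phMeasure piv T) :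
    ∀ b : ℝ, 0 < b →
      Tendsto
        (fun x => (ℙ {ω | Y ω > x}).toReal / (ℙ {ω | V ω * Y ω > b * x}).toReal)
        atTop (𝓝 0) := by
  intro b hb
  have hYtail (z : ℝ) : ℙ {ω | Y ω > z} = phMeasure piv T (Ioi z) := by
    rw [← hYlaw, Measure.map_apply hYm measurableSet_Ioi]
    rfl
  obtain ⟨δ, hδ, hY⟩ := hPH.phMeasure_Ioi_isBigO
  obtain ⟨y₁, hy₁, hq⟩ : ∃ y₁ > 0, ℙ (Y ⁻¹' Ioi y₁) ≠ 0 := by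
    have := Measure.isProbabilityMeasure_map (μ := (ℙ : Measure Ω)) hYm.aemeasurable
    simp_rw [← Measure.map_apply hYm measurableSet_Ioi]
    refine exists_gt_measure_Ioi_ne_zero ?_
    rw [← compl_Iic, prob_compl_eq_one_sub measurableSet_Iic, hYlaw, phMeasure_Iic_zero]
    simp
  have := Measure.isProbabilityMeasure_map (μ := (ℙ : Measure Ω)) hVm.aemeasurable
  -- chosen so that `ε * (b * x / y₁) = δ * x / 2`
  set ε := δ * y₁ / (2 * b)
  have hV := hVlong.exp_neg_mul_isBigO (ε := ε) (by positivity)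
  simp_rw [Measure.map_apply hVm measurableSet_Ioi] at hV
  have hVY := ((hV.comp_tendsto (tendsto_id.atTop_div_const hy₁)).trans
    (hInd.measure_Ioi_div_isBigO_measure_mul_gt hy₁ hq)).comp_tendsto
    (tendsto_id.const_mul_atTop hb)
  have hexp : (fun x => Real.exp (-δ * x)) =o[atTop]
      fun x => Real.exp (-ε * (b * x / y₁)) := by
    rw [Real.isLittleO_exp_comp_exp_comp]
    convert tendsto_id.const_mul_atTop (half_pos hδ) using 2 with x
    simp only [ε, id]
    field_simp
    ring
  refine IsLittleO.tendsto_div_nhds_zero ?_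
  simp_rw [hYtail]
  exact hY.trans_isLittleO (hexp.trans_isBigO hVY)

/-- if `V ≥ 0` has long-tailed law and `Y ~ PH(π,T)` is independent of `V`,
then for every `b > 0`, `F̄_Y(x) = o(F̄_{VY}(bx))` as `x → ∞`. -/
theorem ph_tail_negligible_of_longTailed
    {Ω : Type*} [MeasureSpace Ω] [IsProbabilityMeasure (ℙ : Measure Ω)]
    {p : ℕ} (piv : Fin p → ℝ) (T : Matrix (Fin p) (Fin p) ℝ) (hPH : IsPHRepr piv T)
    (V Y : Ω → ℝ) (hVm : Measurable V) (hYm : Measurable Y)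
    (hInd : IndepFun V Y ℙ)
    (hVnn : ∀ᵐ ω ∂ℙ, 0 ≤ V ω)
    (hVlong : LongTailed (Measure.map V ℙ))
    (hYlaw : Measure.map Y ℙ = phMeasure piv T) :
    ∀ b : ℝ, 0 < b →
      Tendsto
        (fun x => (ℙ {ω | Y ω > x}).toReal / (ℙ {ω | V ω * Y ω > b * x}).toReal)
        atTop (𝓝 0) :=
  ph_tail_negligible_of_longTailed_general piv T hPH V Y hVm hYm hInd hVlong hYlaw
end
end
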